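/- Let H be an m×n real matrix and W an m×m real symmetric positive definite matrix such that HᵀWH is invertible, and define the weighted least-squares estimator x̂(y) := (HᵀWH)⁻¹HᵀWy. Then for every y ∈ ℝ^m and b ∈ ℝ^n, the false-data-injected measurements y + Hb satisfy x̂(y + Hb) = x̂(y) + b, and the measurement residual r(y) := y − Hx̂(y) is invariant under the attack: r(y + Hb) = r(y). Consequently any bad-data detector based on the residual vector (such as the largest normalized residue test) produces the same output on the attacked measurements as on the clean measurements. -/
import Mathlib


open Matrix

/-- Undetectability of false data injection attacks against WLS state
estimation: with `x̂(y) = (HᵀWH)⁻¹HᵀWy`, the attack `y + Hb` shifts the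
estimate by `b`, leaves the residual `r(y) = y − Hx̂(y)` invariant, and hence
any residual-based bad-data detector outputs the same value. -/
theorem stmt4 {m n : ℕ} (H : Matrix (Fin m) (Fin n) ℝ)
    (W : Matrix (Fin m) (Fin m) ℝ) (hW : W.PosDef)
    (hInv : IsUnit (Hᵀ * W * H)) :
    let xhat : (Fin m → ℝ) → (Fin n → ℝ) := fun y =>
      (Hᵀ * W * H)⁻¹.mulVec (Hᵀ.mulVec (W.mulVec y))
    let r : (Fin m → ℝ) → (Fin m → ℝ) := fun y => y - H.mulVec (xhat y)
    ∀ (y : Fin m → ℝ) (b : Fin n → ℝ),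
      xhat (y + H.mulVec b) = xhat y + b ∧
      r (y + H.mulVec b) = r y ∧
      ∀ {β : Type} (detect : (Fin m → ℝ) → β),
        detect (r (y + H.mulVec b)) = detect (r y) := by
  intro xhat r y b
  have hx : xhat (y + H.mulVec b) = xhat y + b := by
    have h1 : (Hᵀ * W * H)⁻¹.mulVec (Hᵀ.mulVec (W.mulVec (H.mulVec b))) = b := by
      rw [Matrix.mulVec_mulVec, Matrix.mulVec_mulVec, Matrix.mulVec_mulVec,
        show (Hᵀ * W * H)⁻¹ * Hᵀ * W * H = (Hᵀ * W * H)⁻¹ * (Hᵀ * W * H) by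
          simp [Matrix.mul_assoc],
        Matrix.nonsing_inv_mul _ ((Matrix.isUnit_iff_isUnit_det _).mp hInv),
        Matrix.one_mulVec]
    simp only [xhat, Matrix.mulVec_add, h1]
  refine ⟨hx, ?_, ?_⟩
  · have : r (y + H.mulVec b) = r y := by
      simp only [r, hx]
      rw [Matrix.mulVec_add]
      abel
    exact this
  · intro β detect
    have : r (y + H.mulVec b) = r y := by
      simp only [r, hx]
      rw [Matrix.mulVec_add]
      abel
    rw [this]
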